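/- arXiv:2407.07908 — 7 statements merged into one kernel-verified Lean document; each statement's English description precedes it below -/
import Mathlib

section
/- For any finite set T ⊆ [d] and any integer 0 ≤ x ≤ |T|, the uniform superposition over all orderings of T (the type state |T⟩) decomposes as |T⟩ = (1/√(C(|T|,x))) · Σ_{X ∈ C(T,x)} |X⟩ ⊗ |T\X⟩, where the sum is over all x-element subsets X of T, the first register holds the type state of X and the second the type state of T\X. Equivalently: the vectors |X⟩⊗|T\X⟩ for distinct x-subsets X are pairwise orthogonal unit vectors, and each has inner product 1/√(C(|T|,x)) with |T⟩. -/
/-- The type state `|T⟩` of a finite set `T` (a collision-free type), as a real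
vector indexed by tuples `ι → α`: the uniform superposition
`(1/√(|ι|!))·Σ_v |v⟩` over all tuples `v` enumerating `T` without repetition. -/
noncomputable def typeState {α : Type*} [DecidableEq α] {ι : Type*} [Fintype ι] [DecidableEq ι]
    (T : Finset α) : (ι → α) → ℝ := fun v =>
  if Function.Injective v ∧ Finset.image v Finset.univ = T then
    (Real.sqrt (Nat.factorial (Fintype.card ι)))⁻¹ else 0

/-! A tuple `v` on `ι ⊕ κ` enumerates `T` exactly when, for `X` the set of its values on `ι`
(an `|ι|`-subset of `T`), its restrictions to `ι` and `κ` enumerate `X` and `T \ X`. Hence at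
most one term of the sum is nonzero, and the normalisations agree because
`(m + n)! = C(m + n, m) · m! · n!`. -/

open Finset Function Fintype Sum
open scoped Nat

lemma sqrt_factorial_add (m n : ℕ) :
    √((m + n)! : ℝ) = √((m + n).choose m : ℝ) * √(m ! : ℝ) * √(n ! : ℝ) := by
  rw [← Real.sqrt_mul (by positivity), ← Real.sqrt_mul (by positivity)]
  congr 1
  have h := Nat.choose_mul_factorial_mul_factorial (Nat.le_add_right m n)
  rw [Nat.add_sub_cancel_left] at h
  exact_mod_cast h.symm

variable {α ι κ : Type*} [DecidableEq α] [Fintype ι] [Fintype κ]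

def Enumerates (v : ι → α) (T : Finset α) : Prop :=
  Injective v ∧ image v univ = T

lemma image_univ_sum (v : ι ⊕ κ → α) :
    image v univ = image (v ∘ inl) univ ∪ image (v ∘ inr) univ := by
  ext a
  simp [Sum.exists]

lemma enumerates_sum_iff {v : ι ⊕ κ → α} {T X : Finset α} (hXT : X ⊆ T) :
    Enumerates (v ∘ inl) X ∧ Enumerates (v ∘ inr) (T \ X) ↔
      Enumerates v T ∧ image (v ∘ inl) univ = X := by
  rw [← Sum.elim_comp_inl_inr v]
  simp only [Enumerates, Sum.elim_injective, Sum.elim_comp_inl, Sum.elim_comp_inr, image_univ_sum]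
  constructor
  · rintro ⟨⟨hl, rfl⟩, hr, hR⟩
    refine ⟨⟨⟨hl, hr, fun a b hab => ?_⟩, by rw [hR, union_sdiff_of_subset hXT]⟩, rfl⟩
    have hb : v (inr b) ∈ T \ image (v ∘ inl) univ := hR ▸ mem_image_of_mem _ (mem_univ b)
    exact (mem_sdiff.1 hb).2 (mem_image.2 ⟨a, mem_univ a, hab⟩)
  · rintro ⟨⟨⟨hl, hr, hlr⟩, rfl⟩, rfl⟩
    refine ⟨⟨hl, rfl⟩, hr, (union_sdiff_cancel_left ?_).symm⟩
    simp only [disjoint_left, mem_image, mem_univ, true_and, comp_apply]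
    rintro _ ⟨a, rfl⟩ ⟨b, hb⟩
    exact hlr a b hb.symm

variable [DecidableEq ι] [DecidableEq κ]

lemma typeState_of_enumerates {T : Finset α} {v : ι → α} (h : Enumerates v T) :
    typeState T v = (√((card ι)! : ℝ))⁻¹ :=
  if_pos h

lemma typeState_of_not_enumerates {T : Finset α} {v : ι → α} (h : ¬Enumerates v T) :
    typeState T v = 0 :=
  if_neg h

theorem typeState_eq_sum_powersetCard (T : Finset α) (v : ι ⊕ κ → α) :
    typeState T v = (√((card ι + card κ).choose (card ι) : ℝ))⁻¹ *
      ∑ X ∈ T.powersetCard (card ι), typeState X (v ∘ inl) * typeState (T \ X) (v ∘ inr) := by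
  by_cases hv : Enumerates v T
  · set X₀ := image (v ∘ inl) univ
    have hX₀T : X₀ ⊆ T := hv.2 ▸ (image_univ_sum v).symm ▸ subset_union_left
    obtain ⟨hl, hr⟩ := (enumerates_sum_iff hX₀T).2 ⟨hv, rfl⟩
    have hX₀ : X₀ ∈ T.powersetCard (card ι) :=
      mem_powersetCard.2 ⟨hX₀T, card_image_of_injective _ hl.1⟩
    rw [sum_eq_single_of_mem X₀ hX₀ fun X _ hne => ?_]
    · rw [typeState_of_enumerates hv, typeState_of_enumerates hl, typeState_of_enumerates hr,
        card_sum, sqrt_factorial_add, mul_inv, mul_inv, mul_assoc]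
    · rw [typeState_of_not_enumerates fun h => hne h.2.symm, zero_mul]
  · rw [typeState_of_not_enumerates hv, Finset.sum_eq_zero fun X hX => ?_, mul_zero]
    by_cases hl : Enumerates (v ∘ inl) X
    · have hr : ¬Enumerates (v ∘ inr) (T \ X) := fun hr =>
        hv ((enumerates_sum_iff (mem_powersetCard.1 hX).1).1 ⟨hl, hr⟩).1
      rw [typeState_of_not_enumerates hr, mul_zero]
    · rw [typeState_of_not_enumerates hl, zero_mul]

/-- for a set `T ⊆ [d]` and `0 ≤ x ≤ |T|`, the type state decomposes
as `|T⟩ = (1/√C(|T|,x)) Σ_{X ∈ C(T,x)} |X⟩ ⊗ |T\X⟩` (stated coordinatewise, with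
the first register indexed by `Fin x` and the second by `Fin (|T|-x)`). -/
theorem stmt0 (d : ℕ) (T : Finset (Fin d)) (x : ℕ) (hx : x ≤ T.card)
    (v : Fin x ⊕ Fin (T.card - x) → Fin d) :
    typeState (ι := Fin x ⊕ Fin (T.card - x)) T v
      = (Real.sqrt (T.card.choose x))⁻¹ *
          ∑ X ∈ T.powersetCard x,
            typeState (ι := Fin x) X (v ∘ Sum.inl) *
              typeState (ι := Fin (T.card - x)) (T \ X) (v ∘ Sum.inr) := by
  simpa only [Fintype.card_fin, Nat.add_sub_cancel' hx] using typeState_eq_sum_powersetCard T v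
end

section
/- Let d, t, s be natural numbers with d ≥ 2t and 0 ≤ s ≤ t. Fix disjoint sets C, I ⊆ [d] with |C| = |I| = s. Consider the matrix K = Σ_{X',Y'} |C ⊎ Y'⟩⟨C ⊎ X'| ⊗ |I ⊎ Y'⟩⟨I ⊎ X'|, where the sum is over ordered pairs of disjoint (t−s)-element subsets X', Y' of [d] \ (C ⊎ I). Then K is isospectral to the adjacency matrix of the Kneser graph K(d−2s, t−s): its multiset of nonzero eigenvalues (with multiplicity) equals that of the Kneser graph adjacency matrix. -/
/-- The adjacency matrix of the Kneser graph `K(v,k)`. -/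
def kneserAdj (v k : ℕ) :
    Matrix {S : Finset (Fin v) // S.card = k} {S : Finset (Fin v) // S.card = k} ℝ :=
  Matrix.of fun S T => if Disjoint S.1 T.1 then 1 else 0

/-- The matrix `K_{C,I} = Σ_{X',Y'} |C ⊎ Y'⟩⟨C ⊎ X'| ⊗ |I ⊎ Y'⟩⟨I ⊎ X'|`, the sum
ranging over ordered pairs of disjoint `(t-s)`-subsets `X', Y'` of `[d] \ (C ⊎ I)`. -/
noncomputable def kMat (d t s : ℕ) (C I : Finset (Fin d)) :
    Matrix (Finset (Fin d) × Finset (Fin d)) (Finset (Fin d) × Finset (Fin d)) ℝ :=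
  ∑ X' ∈ (Finset.univ \ (C ∪ I)).powersetCard (t - s),
    ∑ Y' ∈ (Finset.univ \ (C ∪ I)).powersetCard (t - s),
      if Disjoint X' Y' then
        Matrix.single (C ∪ Y', I ∪ Y') (C ∪ X', I ∪ X') (1 : ℝ)
      else 0

/-!
Write `V = [d] \ (C ∪ I)` and `g Z = (C ∪ Z, I ∪ Z)`. Relabelling `V` as `[d - 2s]`, the matrix `K`
is the Kneser adjacency matrix `A` transported along the injection `g` and extended by zero, i.e.
`K = P A Pᵀ` for the 0/1 matrix `P` of `g`. Since the characteristic polynomials of `P (A Pᵀ)` and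
`(A Pᵀ) P` agree up to a power of `X`, and `Pᵀ P = 1`, the spectrum of `K` is that of `A` plus zeros.
-/

open Finset Matrix Polynomial

namespace Matrix

variable {R m n : Type*} [CommRing R] [Fintype m] [DecidableEq n]

theorem sum_single_eq_submatrix_one_mul_mul (f : m → n) (A : Matrix m m R) :
    ∑ i, ∑ j, single (f i) (f j) (A i j) =
      (1 : Matrix n n R).submatrix id f * A * (1 : Matrix n n R).submatrix f id := by
  ext p q
  simp only [Matrix.sum_apply, mul_apply, Finset.sum_mul]
  conv_rhs => rw [Finset.sum_comm]
  refine Fintype.sum_congr _ _ fun i => Fintype.sum_congr _ _ fun j => ?_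
  simp only [single_apply, submatrix_apply, id, one_apply]
  split_ifs <;> simp_all

theorem charpoly_sum_single_mul_X_pow [DecidableEq m] [Fintype n] {f : m → n}
    (hf : Function.Injective f) (A : Matrix m m R) :
    (∑ i, ∑ j, single (f i) (f j) (A i j)).charpoly * X ^ Fintype.card m =
      A.charpoly * X ^ Fintype.card n := by
  set P : Matrix n m R := (1 : Matrix n n R).submatrix id f
  have hP : (1 : Matrix n n R).submatrix f id * P = 1 := by
    rw [← submatrix_mul _ _ _ _ _ Function.bijective_id, Matrix.one_mul, submatrix_one f hf]
  rw [sum_single_eq_submatrix_one_mul_mul, Matrix.mul_assoc, mul_comm, charpoly_mul_comm',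
    Matrix.mul_assoc, hP, Matrix.mul_one, mul_comm]

end Matrix

variable {d t s m : ℕ} {C I : Finset (Fin d)}

theorem kMat_eq_sum_single (ι : Fin m ↪ Fin d) (hι : univ.map ι = univ \ (C ∪ I)) :
    kMat d t s C I = ∑ S, ∑ T, single (C ∪ S.1.map ι, I ∪ S.1.map ι)
      (C ∪ T.1.map ι, I ∪ T.1.map ι) (kneserAdj m (t - s) S T) := by
  conv_rhs => rw [Finset.sum_comm]
  rw [kMat, ← hι, powersetCard_map, sum_map, Finset.sum_subtype _ fun _ => mem_powersetCard_univ]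
  refine Finset.sum_congr rfl fun T _ => ?_
  rw [sum_map, Finset.sum_subtype _ fun _ => mem_powersetCard_univ]
  refine Finset.sum_congr rfl fun S _ => ?_
  simp only [kneserAdj, of_apply]
  split_ifs <;> simp_all [disjoint_comm]

theorem injective_union_map (ι : Fin m ↪ Fin d) (hι : univ.map ι = univ \ (C ∪ I)) :
    Function.Injective fun S : Finset (Fin m) => (C ∪ S.map ι, I ∪ S.map ι) := by
  have hC : ∀ S : Finset (Fin m), Disjoint C (S.map ι) := fun S =>
    disjoint_of_subset_right (hι ▸ map_subset_map.2 (subset_univ S))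
      (disjoint_sdiff.mono_left subset_union_left)
  intro S T h
  have h₁ := congrArg (fun p => p.1 \ C) h
  simp only [union_sdiff_cancel_left (hC _)] at h₁
  exact map_injective ι h₁

theorem stmt1_general (d t s : ℕ)
    (C I : Finset (Fin d)) (hCI : Disjoint C I) (hC : C.card = s) (hI : I.card = s) :
    (kMat d t s C I).charpoly *
        Polynomial.X ^ (Fintype.card {S : Finset (Fin (d - 2 * s)) // S.card = t - s})
      = (kneserAdj (d - 2 * s) (t - s)).charpoly *
          Polynomial.X ^ (Fintype.card (Finset (Fin d) × Finset (Fin d))) := by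
  have hcard : (univ \ (C ∪ I)).card = d - 2 * s := by
    rw [card_univ_sdiff, card_union_of_disjoint hCI, hC, hI, Fintype.card_fin, two_mul]
  set ι := ((univ \ (C ∪ I)).orderEmbOfFin hcard).toEmbedding
  have hι : univ.map ι = univ \ (C ∪ I) := map_orderEmbOfFin_univ _ hcard
  rw [kMat_eq_sum_single ι hι]
  exact charpoly_sum_single_mul_X_pow ((injective_union_map ι hι).comp Subtype.val_injective) _

/-- for disjoint `s`-sets `C, I ⊆ [d]` with `s ≤ t` and `d ≥ 2t`, the
matrix `K_{C,I}` is isospectral to the adjacency matrix of the Kneser graph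
`K(d-2s, t-s)`: their multisets of nonzero eigenvalues (with multiplicity) agree,
expressed via characteristic polynomials padded by powers of `X`. -/
theorem stmt1 (d t s : ℕ) (hd : 2 * t ≤ d) (hs : s ≤ t)
    (C I : Finset (Fin d)) (hCI : Disjoint C I) (hC : C.card = s) (hI : I.card = s) :
    (kMat d t s C I).charpoly *
        Polynomial.X ^ (Fintype.card {S : Finset (Fin (d - 2 * s)) // S.card = t - s})
      = (kneserAdj (d - 2 * s) (t - s)).charpoly *
          Polynomial.X ^ (Fintype.card (Finset (Fin d) × Finset (Fin d))) :=
  stmt1_general d t s C I hCI hC hI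
end

section
/- Let d ≥ 2t. Define p₁ = C(d,t)·C(d−t,t)/C(d+t−1,t)² (the probability that two independently uniformly chosen types T₁, T₂ ∈ [0:t]^d are each collision-free and mutually disjoint) and p₂ = C(d,2t)/C(d+2t−1,2t) (the probability that a uniformly chosen type T ∈ [0:2t]^d is collision-free). Then p₁ − p₂ = Π_{i=0}^{2t−1}(1 − (2t−1)/(d+i)) · (Π_{i=0}^{t−1}(1 + t/(d+i)) − 1). In particular, for t² ≤ d, p₁ − p₂ = Ω(t²/d). -/
/-!
Write `x^(k) = x (x+1) ⋯ (x+k-1)`, so that `C(n+k-1, k) = n^(k) / k!`. With `x = d - 2t + 1`,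
`p₁ = x^(t) (x+t)^(t) / (d^(t))²` and, since `x^(2t) = x^(t) (x+t)^(t)` and
`d^(2t) = d^(t) (d+t)^(t)`, also `p₂ = x^(t) (x+t)^(t) / (d^(t) (d+t)^(t))`. The difference is
`x^(2t)/d^(2t) · ((d+t)^(t)/d^(t) - 1)`, and each of these two ratios of rising products is a
product of factors `1 + c/(d+i)`.

For the bound, `1 - y ≥ exp(-4y)` on `[0, 3/4]` bounds the first factor below by
`exp(-4 · 2t · (2t-1)/d) ≥ e⁻¹⁶`, and Bernoulli's inequality bounds the second below by
`(1 + t/(2d))^t - 1 ≥ t²/(2d)`.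
-/

open Finset Nat

section RisingProd

variable {K : Type*} [Field K]

def risingProd (x : K) (k : ℕ) : K := ∏ i ∈ range k, (x + i)

lemma risingProd_add (x : K) (k l : ℕ) :
    risingProd x (k + l) = risingProd x k * risingProd (x + k) l := by
  simp only [risingProd, prod_range_add, cast_add, add_assoc]

lemma cast_choose_add_sub_one [CharZero K] (n k : ℕ) :
    ((n + k - 1).choose k : K) = risingProd (n : K) k / k ! := by
  have h := congrArg (Nat.cast (R := K)) (ascFactorial_eq_factorial_mul_choose' n k)
  rw [ascFactorial_eq_prod_range] at h
  push_cast at h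
  have hk : (k ! : K) ≠ 0 := Nat.cast_ne_zero.mpr (factorial_ne_zero k)
  rw [risingProd, h]
  field_simp

lemma cast_choose_of_le [CharZero K] {n k : ℕ} (h : k ≤ n) :
    (n.choose k : K) = risingProd ((n : K) - k + 1) k / k ! := by
  have hn : n - k + 1 + k - 1 = n := by omega
  rw [← hn, cast_choose_add_sub_one, hn]
  push_cast [h]
  rfl

variable [LinearOrder K] [IsStrictOrderedRing K]

lemma risingProd_pos {x : K} (hx : 0 < x) (k : ℕ) : 0 < risingProd x k :=
  prod_pos fun i _ => by positivity

lemma prod_one_add_div_eq_risingProd_div {x : K} (hx : 0 < x) (c : K) (k : ℕ) :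
    ∏ i ∈ range k, (1 + c / (x + i)) = risingProd (x + c) k / risingProd x k := by
  rw [risingProd, risingProd, ← prod_div_distrib]
  refine prod_congr rfl fun i _ => ?_
  have : 0 < x + i := by positivity
  field_simp
  ring

end RisingProd

theorem sub_collisionFree_probabilities_eq {d t : ℕ} (h : 2 * t ≤ d) :
    (d.choose t : ℝ) * ((d - t).choose t) / (((d + t - 1).choose t : ℝ)) ^ 2
        - (d.choose (2 * t) : ℝ) / ((d + 2 * t - 1).choose (2 * t))
      = (∏ i ∈ range (2 * t), (1 - ((2 * t : ℝ) - 1) / ((d : ℝ) + i)))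
          * ((∏ i ∈ range t, (1 + (t : ℝ) / ((d : ℝ) + i))) - 1) := by
  rcases Nat.eq_zero_or_pos t with rfl | ht
  · simp
  have hd : (0 : ℝ) < d := by exact_mod_cast (show 0 < d by omega)
  set x : ℝ := (d : ℝ) - 2 * t + 1
  have hsplit_x : risingProd x (2 * t) = risingProd x t * risingProd (x + t) t := by
    rw [two_mul, risingProd_add]
  have hsplit_d :
      risingProd (d : ℝ) (2 * t) = risingProd (d : ℝ) t * risingProd (d + t : ℝ) t := by
    rw [two_mul, risingProd_add]
  have hdpos := risingProd_pos hd t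
  have hdtpos := risingProd_pos (show (0 : ℝ) < d + t by positivity) t
  have hfirst : ∏ i ∈ range (2 * t), (1 - ((2 * t : ℝ) - 1) / ((d : ℝ) + i))
      = risingProd x (2 * t) / risingProd (d : ℝ) (2 * t) := by
    rw [show x = d + -(2 * t - 1) by ring, ← prod_one_add_div_eq_risingProd_div hd]
    exact prod_congr rfl fun i _ => by ring
  rw [cast_choose_of_le (by omega : t ≤ d), cast_choose_of_le (by omega : t ≤ d - t),
    cast_choose_of_le h, cast_choose_add_sub_one, cast_choose_add_sub_one, hfirst,
    prod_one_add_div_eq_risingProd_div hd, Nat.cast_sub (by omega),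
    show (d : ℝ) - t + 1 = x + t by ring, show (d : ℝ) - t - t + 1 = x by ring,
    show (d : ℝ) - (2 * t : ℕ) + 1 = x by push_cast; ring, hsplit_x, hsplit_d]
  field_simp

lemma exp_neg_four_mul_le_one_sub {y : ℝ} (hy0 : 0 ≤ y) (hy1 : y ≤ 3 / 4) :
    Real.exp (-(4 * y)) ≤ 1 - y := by
  have hpos : 0 < 1 - y := by linarith
  have hle : y / (1 - y) ≤ 4 * y := by
    rw [div_le_iff₀ hpos]; nlinarith
  calc Real.exp (-(4 * y)) ≤ Real.exp (-(y / (1 - y))) := Real.exp_le_exp.mpr (by linarith)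
    _ = (Real.exp (y / (1 - y)))⁻¹ := Real.exp_neg _
    _ ≤ (1 / (1 - y))⁻¹ := by
        gcongr
        calc 1 / (1 - y) = y / (1 - y) + 1 := by field_simp; ring
          _ ≤ _ := Real.add_one_le_exp _
    _ = 1 - y := by simp

lemma exp_neg_four_mul_sum_le_prod_one_sub {ι : Type*} (s : Finset ι) {y : ι → ℝ}
    (hy0 : ∀ i ∈ s, 0 ≤ y i) (hy1 : ∀ i ∈ s, y i ≤ 3 / 4) :
    Real.exp (-(4 * ∑ i ∈ s, y i)) ≤ ∏ i ∈ s, (1 - y i) := by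
  rw [mul_sum, ← sum_neg_distrib, Real.exp_sum]
  exact prod_le_prod (fun i _ => (Real.exp_pos _).le)
    fun i hi => exp_neg_four_mul_le_one_sub (hy0 i hi) (hy1 i hi)

lemma exp_neg_sixteen_le_prod_one_sub {d t : ℕ} (ht : 1 ≤ t) (hsq : t ^ 2 ≤ d)
    (htd : 2 * t ≤ d) :
    Real.exp (-16) ≤ ∏ i ∈ range (2 * t), (1 - ((2 * t : ℝ) - 1) / ((d : ℝ) + i)) := by
  have htr : (1 : ℝ) ≤ t := by exact_mod_cast ht
  have hsqr : (t : ℝ) ^ 2 ≤ d := by exact_mod_cast hsq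
  have htdr : 2 * (t : ℝ) ≤ d := by exact_mod_cast htd
  have hd : (0 : ℝ) < d := by linarith
  have hterm : ∀ i ∈ range (2 * t), ((2 * t : ℝ) - 1) / ((d : ℝ) + i) ≤ (2 * t - 1) / d :=
    fun i _ => div_le_div_of_nonneg_left (by linarith) hd (by simp)
  -- `4 (2t - 1) ≤ 3 d`: from `d ≥ 2` when `t = 1`, and from `d ≥ t²` when `t ≥ 2`
  have hsmall : ((2 * t : ℝ) - 1) / d ≤ 3 / 4 := by
    rw [div_le_iff₀ hd]
    rcases eq_or_lt_of_le ht with rfl | ht2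
    · push_cast; linarith
    · have : (2 : ℝ) ≤ t := by exact_mod_cast ht2
      nlinarith
  have hsum : ∑ i ∈ range (2 * t), ((2 * t : ℝ) - 1) / ((d : ℝ) + i) ≤ 4 := by
    calc _ ≤ ∑ _i ∈ range (2 * t), ((2 * t : ℝ) - 1) / d := sum_le_sum hterm
      _ = 2 * t * (2 * t - 1) / d := by rw [sum_const, card_range, nsmul_eq_mul]; push_cast; ring
      _ ≤ 4 := by rw [div_le_iff₀ hd]; nlinarith
  exact le_trans (Real.exp_le_exp.mpr (by linarith)) (exp_neg_four_mul_sum_le_prod_one_sub _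
    (fun i _ => div_nonneg (by linarith) (by positivity)) fun i hi => (hterm i hi).trans hsmall)

lemma sq_div_two_mul_le_prod_one_add_sub_one {d t : ℕ} (htd : t ≤ d) :
    (t : ℝ) ^ 2 / (2 * d) ≤ (∏ i ∈ range t, (1 + (t : ℝ) / ((d : ℝ) + i))) - 1 := by
  have hfactor : ∀ i ∈ range t, 1 + (t : ℝ) / (2 * d) ≤ 1 + t / ((d : ℝ) + i) := by
    intro i hi
    have hi : i < t := mem_range.mp hi
    have hd : (0 : ℝ) < d := by exact_mod_cast (show 0 < d by omega)
    have hid : (i : ℝ) ≤ d := by exact_mod_cast (show i ≤ d by omega)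
    gcongr
    linarith
  have hbernoulli := one_add_mul_le_pow (a := (t : ℝ) / (2 * d))
    (by linarith [show 0 ≤ (t : ℝ) / (2 * d) by positivity]) t
  have hprod : (1 + (t : ℝ) / (2 * d)) ^ t ≤ ∏ i ∈ range t, (1 + t / ((d : ℝ) + i)) := by
    simpa using prod_le_prod (fun i _ => by positivity) hfactor
  calc (t : ℝ) ^ 2 / (2 * d) = 1 + t * (t / (2 * d)) - 1 := by ring
    _ ≤ _ := by linarith

/-- the exact difference between the probability `p₁` that two
independent uniform types `T₁, T₂ ∈ [0:t]^d` are collision-free and disjoint, and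
the probability `p₂` that a uniform type `T ∈ [0:2t]^d` is collision-free; and the
fact that this difference is `Ω(t²/d)` when `t² ≤ d`. -/
theorem stmt6 :
    (∀ d t : ℕ, 2 * t ≤ d →
      (d.choose t : ℝ) * ((d - t).choose t) / (((d + t - 1).choose t : ℝ)) ^ 2
          - (d.choose (2 * t) : ℝ) / ((d + 2 * t - 1).choose (2 * t))
        = (∏ i ∈ Finset.range (2 * t), (1 - ((2 * t : ℝ) - 1) / ((d : ℝ) + i)))
            * ((∏ i ∈ Finset.range t, (1 + (t : ℝ) / ((d : ℝ) + i))) - 1)) ∧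
    (∃ c : ℝ, 0 < c ∧ ∀ d t : ℕ, 1 ≤ t → t ^ 2 ≤ d → 2 * t ≤ d →
      c * (t : ℝ) ^ 2 / d
        ≤ (d.choose t : ℝ) * ((d - t).choose t) / (((d + t - 1).choose t : ℝ)) ^ 2
            - (d.choose (2 * t) : ℝ) / ((d + 2 * t - 1).choose (2 * t))) := by
  refine ⟨fun d t h => sub_collisionFree_probabilities_eq h,
    Real.exp (-16) / 2, by positivity, fun d t ht hsq htd => ?_⟩
  rw [sub_collisionFree_probabilities_eq htd]
  calc Real.exp (-16) / 2 * (t : ℝ) ^ 2 / d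
        = Real.exp (-16) * ((t : ℝ) ^ 2 / (2 * d)) := by ring
    _ ≤ _ := mul_le_mul (exp_neg_sixteen_le_prod_one_sub ht hsq htd)
        (sq_div_two_mul_le_prod_one_add_sub_one (by omega)) (by positivity)
        ((Real.exp_pos _).le.trans (exp_neg_sixteen_le_prod_one_sub ht hsq htd))
end

section
/- Fix n, λ with n ≥ λ, let ℓ, t ∈ ℕ, and let v = (v₁‖w₁, …, v_{t+ℓ}‖w_{t+ℓ}) be a tuple of (t+ℓ) bitstrings of length n, each split as vᵢ ∈ {0,1}^λ and wᵢ ∈ {0,1}^{n−λ}. Suppose the type of v is ℓ-fold λ-prefix collision-free. Let σ be a permutation of [t+ℓ]. Then the average over uniform k ∈ {0,1}^λ of (−1)^{⟨k, ⊕_{i=1}^{ℓ}(vᵢ ⊕ v_{σ(i)})⟩} equals 1 if σ maps the set {1,…,ℓ} onto itself, and equals 0 otherwise. -/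
/-!
The map `k ↦ (-1) ^ ⟨k, z⟩` is a character of `(ZMod 2)^λ`, so its average is `1` if `z = 0` and
`0` otherwise. Here `z = ∑_{i ∈ S} (vᵢ + v_{σ i}) = ∑_{i ∈ S} vᵢ + ∑_{i ∈ σ S} vᵢ` on the first `λ`
coordinates, with `S = {i | i < ℓ}`; in characteristic two it vanishes iff the two prefix sums agree,
which by collision-freeness happens iff `σ S = S`.
-/

open Finset

lemma ZMod.neg_one_pow_val_add {R : Type*} [Ring R] (x y : ZMod 2) :
    (-1 : R) ^ (x + y).val = (-1) ^ x.val * (-1) ^ y.val := by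
  rw [ZMod.val_add, ← pow_add, ← neg_one_pow_eq_pow_mod_two]

lemma ZMod.neg_one_pow_val_sum {R ι : Type*} [CommRing R] (s : Finset ι) (a : ι → ZMod 2) :
    (-1 : R) ^ (∑ i ∈ s, a i).val = ∏ i ∈ s, (-1) ^ (a i).val := by
  classical
  induction s using Finset.induction with
  | empty => simp
  | insert _ _ h ih => rw [sum_insert h, prod_insert h, ZMod.neg_one_pow_val_add, ih]

lemma ZMod.sum_neg_one_pow_val_mul {R : Type*} [Ring R] (z : ZMod 2) :
    ∑ k : ZMod 2, (-1 : R) ^ (k * z).val = if z = 0 then 2 else 0 := by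
  rw [Fintype.sum_eq_add 0 1 (by decide) fun x hx =>
    (hx.2 ((by decide : ∀ x : ZMod 2, x ≠ 0 → x = 1) x hx.1)).elim]
  obtain rfl | rfl : z = 0 ∨ z = 1 := (by decide : ∀ x : ZMod 2, x = 0 ∨ x = 1) z
  · simp [one_add_one_eq_two]
  · simp [ZMod.val_one]

lemma ZMod.sum_neg_one_pow_val_dotProduct {R ι : Type*} [CommRing R] [Fintype ι] [DecidableEq ι]
    (z : ι → ZMod 2) :
    ∑ k : ι → ZMod 2, (-1 : R) ^ (∑ j, k j * z j).val =
      if ∀ j, z j = 0 then 2 ^ Fintype.card ι else 0 := by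
  simp_rw [ZMod.neg_one_pow_val_sum, ← Fintype.prod_sum fun j (x : ZMod 2) => (-1 : R) ^ (x * z j).val,
    ZMod.sum_neg_one_pow_val_mul, Finset.prod_ite_zero, prod_const, card_univ, mem_univ,
    true_imp_iff]

def IsSumCollisionFree {ι κ R : Type*} [AddCommMonoid R] (ℓ : ℕ) (u : ι → κ → R) : Prop :=
  ∀ S S' : Finset ι, #S = ℓ → #S' = ℓ → (∀ j, ∑ i ∈ S, u i j = ∑ i ∈ S', u i j) → S = S'

lemma IsSumCollisionFree.image_eq_iff {ι κ R : Type*} [DecidableEq ι] [Ring R] [CharP R 2] {ℓ : ℕ}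
    {u : ι → κ → R} (hu : IsSumCollisionFree ℓ u) (σ : Equiv.Perm ι) {S : Finset ι} (hS : #S = ℓ) :
    S.image σ = S ↔ ∀ j, ∑ i ∈ S, (u i j + u (σ i) j) = 0 := by
  have hsum : ∀ j, ∑ i ∈ S, (u i j + u (σ i) j) = ∑ i ∈ S.image σ, u i j + ∑ i ∈ S, u i j := by
    intro j
    rw [sum_add_distrib, sum_image fun a _ b _ h => σ.injective h, add_comm]
  simp_rw [hsum, CharTwo.add_eq_zero]
  refine ⟨fun h j => by rw [h], hu _ _ ?_ hS⟩
  rw [card_image_of_injective _ σ.injective, hS]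

/-- for a tuple `v` of `(t+ℓ)` bitstrings of length `n` whose type
is `ℓ`-fold `λ`-prefix collision-free and a permutation `σ` of `[t+ℓ]`, the
average over uniform `k ∈ {0,1}^λ` of `(-1)^{⟨k, ⊕_{i≤ℓ}(vᵢ ⊕ v_{σ(i)})⟩}` is `1`
if `σ` maps `{1,…,ℓ}` onto itself and `0` otherwise. -/
theorem stmt7 (n lam t ℓ : ℕ) (hln : lam ≤ n)
    (v : Fin (t + ℓ) → Fin n → ZMod 2)
    (hfree : ∀ S S' : Finset (Fin (t + ℓ)), S.card = ℓ → S'.card = ℓ →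
      (∀ j : Fin lam, (∑ i ∈ S, v i (Fin.castLE hln j)) = ∑ i ∈ S', v i (Fin.castLE hln j)) →
      S = S')
    (σ : Equiv.Perm (Fin (t + ℓ))) :
    ((2 : ℝ) ^ lam)⁻¹ * ∑ k : Fin lam → ZMod 2,
        (-1 : ℝ) ^ (∑ j : Fin lam, k j *
            ∑ i ∈ Finset.univ.filter (fun i : Fin (t + ℓ) => (i : ℕ) < ℓ),
              (v i (Fin.castLE hln j) + v (σ i) (Fin.castLE hln j))).val
      = if Finset.image σ (Finset.univ.filter (fun i : Fin (t + ℓ) => (i : ℕ) < ℓ))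
            = Finset.univ.filter (fun i : Fin (t + ℓ) => (i : ℕ) < ℓ)
        then 1 else 0 := by
  have hS : #{i : Fin (t + ℓ) | (i : ℕ) < ℓ} = ℓ := by
    rw [Fin.card_filter_val_lt]; omega
  have hfree' : IsSumCollisionFree ℓ fun i (j : Fin lam) => v i (Fin.castLE hln j) := hfree
  simp only [ZMod.sum_neg_one_pow_val_dotProduct, Fintype.card_fin, hfree'.image_eq_iff σ hS]
  split_ifs <;> simp
end

section
/- Let d, t, ℓ ∈ ℕ with d = 2^n for n = ω(log λ), t = λ³, ℓ = λ/log λ. Define r₀ = 2^λ · C(d+ℓ+t−1, ℓ+t) and r₁ = C(d+ℓ−1, ℓ) · C(d+t−1, t). Then r₀/r₁ = (2^λ / C(ℓ+t, ℓ)) · Π_{i=0}^{ℓ−1}(1 + t/(d+i)) ≤ 2^λ · ((1 + t/d)/(1 + t/ℓ))^ℓ, and for sufficiently large λ this quantity is at most 2^{−λ}. -/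
/-!
Write `d = e + 1`. Both sides of `C(e+ℓ+t, ℓ+t) · C(ℓ+t, ℓ) = C(e+t+ℓ, ℓ) · C(e+t, t)` are the
trinomial coefficient `(e+ℓ+t)! / (e! ℓ! t!)`, so the rank ratio is
`C(e+t+ℓ, ℓ) / (C(e+ℓ, ℓ) · C(ℓ+t, ℓ))`. The product formula
`C(m+ℓ, ℓ) = ∏_{i<ℓ} (1 + m/(i+1))` turns the first quotient into `∏_{i<ℓ} (1 + t/(d+i))`
and gives `C(ℓ+t, ℓ) ≥ (1 + t/ℓ)^ℓ`.

Asymptotically, with `L = log₂ λ` and `ℓ = ⌊λ/L⌋`: since `n ≥ 8L` we have `4ℓt ≤ d`, hence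
`(1 + t/d)^ℓ ≤ exp (ℓt/d) ≤ 2`; and `t/ℓ ≥ λ²L ≥ 2^(2L+2)` together with `(2L+2)ℓ > 2λ`
(which uses `ℓ ≥ L`) gives `(1 + t/ℓ)^ℓ ≥ 2^(2λ+1)`.
-/

open Filter Finset

theorem cast_choose_add_eq_prod (m ℓ : ℕ) :
    ((m + ℓ).choose ℓ : ℝ) = ∏ i ∈ range ℓ, (1 + (m : ℝ) / (i + 1)) := by
  induction ℓ with
  | zero => simp
  | succ ℓ ih =>
    have key : ((m + ℓ + 1) * (m + ℓ).choose ℓ : ℝ) = (m + ℓ + 1).choose (ℓ + 1) * (ℓ + 1) := by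
      exact_mod_cast Nat.add_one_mul_choose_eq (m + ℓ) ℓ
    rw [prod_range_succ, ← ih, ← add_assoc]
    field_simp
    linear_combination -key

theorem cast_choose_add_div_eq_prod (e t ℓ : ℕ) :
    ((e + t + ℓ).choose ℓ : ℝ) / (e + ℓ).choose ℓ =
      ∏ i ∈ range ℓ, (1 + (t : ℝ) / (e + 1 + i)) := by
  rw [cast_choose_add_eq_prod, cast_choose_add_eq_prod, ← prod_div_distrib]
  refine prod_congr rfl fun i _ => ?_
  push_cast
  field_simp
  ring

theorem Nat.choose_add_add_mul_choose (e t ℓ : ℕ) :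
    (e + ℓ + t).choose (ℓ + t) * (ℓ + t).choose ℓ = (e + t + ℓ).choose ℓ * (e + t).choose t := by
  rw [Nat.choose_mul (Nat.le_add_right ℓ t)]
  grind

theorem rank_ratio_eq (c : ℝ) {d : ℕ} (hd : 1 ≤ d) (t ℓ : ℕ) :
    c * ((d + ℓ + t - 1).choose (ℓ + t) : ℝ) /
        (((d + ℓ - 1).choose ℓ : ℝ) * ((d + t - 1).choose t : ℝ))
      = (c / ((ℓ + t).choose ℓ : ℝ)) * ∏ i ∈ range ℓ, (1 + (t : ℝ) / (d + i)) := by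
  obtain ⟨e, rfl⟩ : ∃ e, d = e + 1 := ⟨d - 1, by omega⟩
  have hmul : ((e + ℓ + t).choose (ℓ + t) * (ℓ + t).choose ℓ : ℝ) =
      (e + t + ℓ).choose ℓ * (e + t).choose t := by
    exact_mod_cast Nat.choose_add_add_mul_choose e t ℓ
  have h₁ : ((ℓ + t).choose ℓ : ℝ) ≠ 0 := by simp [Nat.choose_eq_zero_iff]
  have h₂ : ((e + ℓ).choose ℓ : ℝ) ≠ 0 := by simp [Nat.choose_eq_zero_iff]
  have h₃ : ((e + t).choose t : ℝ) ≠ 0 := by simp [Nat.choose_eq_zero_iff]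
  rw [show e + 1 + ℓ + t - 1 = e + ℓ + t by omega, show e + 1 + ℓ - 1 = e + ℓ by omega,
    show e + 1 + t - 1 = e + t by omega, Nat.cast_add_one, ← cast_choose_add_div_eq_prod,
    (eq_div_iff_mul_eq h₁).mpr hmul]
  field_simp

theorem one_add_div_pow_le_cast_choose (ℓ t : ℕ) : (1 + (t : ℝ) / ℓ) ^ ℓ ≤ (ℓ + t).choose ℓ := by
  rw [add_comm ℓ t, cast_choose_add_eq_prod, pow_eq_prod_const]
  refine prod_le_prod (fun _ _ => by positivity) fun i hi => ?_
  have : (i : ℝ) + 1 ≤ ℓ := by exact_mod_cast mem_range.mp hi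
  gcongr

theorem prod_one_add_div_add_le_pow {a d : ℝ} (ha : 0 ≤ a) (hd : 0 < d) (ℓ : ℕ) :
    ∏ i ∈ range ℓ, (1 + a / (d + i)) ≤ (1 + a / d) ^ ℓ := by
  rw [pow_eq_prod_const]
  refine prod_le_prod (fun _ _ => by positivity) fun i _ => ?_
  gcongr
  exact le_add_of_nonneg_right i.cast_nonneg

theorem rank_ratio_le {c : ℝ} (hc : 0 ≤ c) {d : ℕ} (hd : 1 ≤ d) (t ℓ : ℕ) :
    (c / ((ℓ + t).choose ℓ : ℝ)) * ∏ i ∈ range ℓ, (1 + (t : ℝ) / (d + i))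
      ≤ c * ((1 + (t : ℝ) / d) / (1 + (t : ℝ) / ℓ)) ^ ℓ := by
  have hd' : (0 : ℝ) < d := by exact_mod_cast hd
  rw [div_pow, mul_comm_div]
  gcongr
  · exact prod_one_add_div_add_le_pow t.cast_nonneg hd' ℓ
  · exact one_add_div_pow_le_cast_choose ℓ t

theorem Nat.sq_le_two_pow {n : ℕ} (hn : 4 ≤ n) : n ^ 2 ≤ 2 ^ n := by
  induction n, hn using Nat.le_induction with
  | base => norm_num
  | succ n hn ih => rw [Nat.pow_succ 2 n]; nlinarith

theorem one_add_pow_le_two {x : ℝ} (hx : -1 ≤ x) {ℓ : ℕ} (h : ℓ * x ≤ Real.log 2) :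
    (1 + x) ^ ℓ ≤ 2 := calc
  (1 + x) ^ ℓ ≤ Real.exp x ^ ℓ := by
    gcongr
    · linarith
    · linarith [Real.add_one_le_exp x]
  _ = Real.exp (ℓ * x) := (Real.exp_nat_mul x ℓ).symm
  _ ≤ 2 := by rwa [← Real.exp_le_exp, Real.exp_log two_pos] at h

theorem four_le_log_two {lam : ℕ} (hlam : 16 ≤ lam) : 4 ≤ Nat.log 2 lam :=
  (Nat.le_log_iff_pow_le (by norm_num) (by omega)).mpr hlam

theorem log_two_le_div_log_two {lam : ℕ} (hlam : 16 ≤ lam) :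
    Nat.log 2 lam ≤ lam / Nat.log 2 lam := by
  have hL := four_le_log_two hlam
  rw [Nat.le_div_iff_mul_le (by omega), ← sq]
  exact (Nat.sq_le_two_pow hL).trans (Nat.pow_log_le_self 2 (by omega))

theorem two_pow_le_one_add_cube_div_pow {lam : ℕ} (hlam : 16 ≤ lam) :
    (2 : ℝ) ^ (2 * lam + 1) ≤
      (1 + (lam : ℝ) ^ 3 / (lam / Nat.log 2 lam : ℕ)) ^ (lam / Nat.log 2 lam) := by
  set L := Nat.log 2 lam
  set ℓ := lam / L
  have hL : 4 ≤ L := four_le_log_two hlam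
  have hLℓ : L ≤ ℓ := log_two_le_div_log_two hlam
  have hexp : 2 * lam + 1 ≤ (2 * L + 2) * ℓ := by
    have hdiv : L * ℓ + lam % L = lam := Nat.div_add_mod lam L
    have hmod : lam % L < L := Nat.mod_lt lam (by omega)
    linarith
  have hLℓ_le : (L : ℝ) * ℓ ≤ lam := by exact_mod_cast Nat.mul_div_le lam L
  have hpowL : (2 : ℝ) ^ L ≤ lam := by exact_mod_cast Nat.pow_log_le_self 2 (by omega)
  have hbase : (2 : ℝ) ^ (2 * L + 2) ≤ 1 + (lam : ℝ) ^ 3 / ℓ := by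
    have hℓ : (0 : ℝ) < ℓ := by exact_mod_cast (show 0 < ℓ by omega)
    have hL4 : (4 : ℝ) ≤ L := by exact_mod_cast hL
    have hlam2 : (lam : ℝ) ^ 2 * L ≤ (lam : ℝ) ^ 3 / ℓ := by
      rw [le_div_iff₀ hℓ]
      nlinarith [sq_nonneg (lam : ℝ)]
    calc (2 : ℝ) ^ (2 * L + 2) = (2 ^ L) ^ 2 * 4 := by ring
      _ ≤ (lam : ℝ) ^ 2 * L := by gcongr
      _ ≤ 1 + (lam : ℝ) ^ 3 / ℓ := by linarith
  calc (2 : ℝ) ^ (2 * lam + 1) ≤ 2 ^ ((2 * L + 2) * ℓ) := pow_le_pow_right₀ one_le_two hexp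
    _ = (2 ^ (2 * L + 2)) ^ ℓ := pow_mul 2 _ ℓ
    _ ≤ _ := by gcongr

theorem one_add_cube_div_two_pow_pow_le_two {lam m : ℕ} (hlam : 16 ≤ lam)
    (hm : 8 * Nat.log 2 lam ≤ m) :
    (1 + (lam : ℝ) ^ 3 / 2 ^ m) ^ (lam / Nat.log 2 lam) ≤ 2 := by
  set L := Nat.log 2 lam
  set ℓ := lam / L
  have hL : 4 ≤ L := four_le_log_two hlam
  have hnat : 4 * (ℓ * lam ^ 3) ≤ 2 ^ m := calc
    4 * (ℓ * lam ^ 3) ≤ 2 ^ 2 * (2 ^ (L + 1)) ^ 4 := by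
      have hlt : lam < 2 ^ (L + 1) := Nat.lt_pow_succ_log_self one_lt_two lam
      have hℓ : ℓ ≤ lam := Nat.div_le_self lam L
      calc 4 * (ℓ * lam ^ 3) ≤ 4 * (lam * lam ^ 3) := by gcongr
        _ = 2 ^ 2 * lam ^ 4 := by ring
        _ ≤ _ := by gcongr
    _ = 2 ^ (4 * L + 6) := by ring
    _ ≤ 2 ^ m := Nat.pow_le_pow_right two_pos (by omega)
  have hreal : 4 * (ℓ * (lam : ℝ) ^ 3) ≤ 2 ^ m := by exact_mod_cast hnat
  refine one_add_pow_le_two (by linarith [show (0 : ℝ) ≤ lam ^ 3 / 2 ^ m by positivity]) ?_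
  have hlog := Real.log_two_gt_d9
  rw [mul_div_assoc', div_le_iff₀ (by positivity)]
  nlinarith [pow_pos (two_pos (α := ℝ)) m]

theorem eventually_rank_ratio_le_inv_two_pow (n : ℕ → ℕ)
    (hn : ∀ C : ℕ, ∀ᶠ lam : ℕ in atTop, C * Nat.log 2 lam ≤ n lam) :
    ∀ᶠ lam : ℕ in atTop,
      (2 : ℝ) ^ lam *
          ((2 ^ n lam + lam / Nat.log 2 lam + lam ^ 3 - 1).choose
            (lam / Nat.log 2 lam + lam ^ 3) : ℝ) /
          (((2 ^ n lam + lam / Nat.log 2 lam - 1).choose (lam / Nat.log 2 lam) : ℝ) *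
            ((2 ^ n lam + lam ^ 3 - 1).choose (lam ^ 3) : ℝ))
        ≤ ((2 : ℝ) ^ lam)⁻¹ := by
  filter_upwards [hn 8, eventually_ge_atTop 16] with lam hm hlam
  rw [rank_ratio_eq _ Nat.one_le_two_pow]
  refine (rank_ratio_le (by positivity) Nat.one_le_two_pow _ _).trans ?_
  have hsmall := one_add_cube_div_two_pow_pow_le_two hlam hm
  have hlarge := two_pow_le_one_add_cube_div_pow hlam
  push_cast
  calc _ ≤ (2 : ℝ) ^ lam * (2 / 2 ^ (2 * lam + 1)) := by
        rw [div_pow]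
        gcongr
    _ = ((2 : ℝ) ^ lam)⁻¹ := by
        field_simp
        ring

/-- the rank-ratio computation `r₀/r₁ = (2^λ/C(ℓ+t,ℓ))·∏(1+t/(d+i))
≤ 2^λ·((1+t/d)/(1+t/ℓ))^ℓ`, and the fact that for `d = 2^n` with `n = ω(log λ)`,
`t = λ³`, `ℓ = λ/log λ`, the ratio is at most `2^{-λ}` for sufficiently large `λ`. -/
theorem stmt10 :
    (∀ d t ℓ lam : ℕ, 1 ≤ ℓ → 1 ≤ d →
      ((2 : ℝ) ^ lam * ((d + ℓ + t - 1).choose (ℓ + t) : ℝ) /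
            (((d + ℓ - 1).choose ℓ : ℝ) * ((d + t - 1).choose t : ℝ))
          = ((2 : ℝ) ^ lam / (((ℓ + t).choose ℓ : ℝ))) *
              ∏ i ∈ Finset.range ℓ, (1 + (t : ℝ) / ((d : ℝ) + i))) ∧
      (((2 : ℝ) ^ lam / (((ℓ + t).choose ℓ : ℝ))) *
            ∏ i ∈ Finset.range ℓ, (1 + (t : ℝ) / ((d : ℝ) + i))
          ≤ (2 : ℝ) ^ lam * ((1 + (t : ℝ) / d) / (1 + (t : ℝ) / ℓ)) ^ ℓ)) ∧
    (∀ n : ℕ → ℕ, (∀ C : ℕ, ∀ᶠ lam : ℕ in atTop, C * Nat.log 2 lam ≤ n lam) →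
      ∀ᶠ lam : ℕ in atTop,
        (2 : ℝ) ^ lam *
            ((2 ^ n lam + lam / Nat.log 2 lam + lam ^ 3 - 1).choose
              (lam / Nat.log 2 lam + lam ^ 3) : ℝ) /
            (((2 ^ n lam + lam / Nat.log 2 lam - 1).choose (lam / Nat.log 2 lam) : ℝ) *
              ((2 ^ n lam + lam ^ 3 - 1).choose (lam ^ 3) : ℝ))
          ≤ ((2 : ℝ) ^ lam)⁻¹) :=
  ⟨fun _ t ℓ lam _ hd => ⟨rank_ratio_eq _ hd t ℓ, rank_ratio_le (by positivity) hd t ℓ⟩,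
    eventually_rank_ratio_le_inv_two_pow⟩
end

section
/- Let ρ, σ, ξ be density matrices on the same Hilbert space. Then F(ρ,ξ) + F(σ,ξ) ≤ 1 + √F(ρ,σ), where F denotes the fidelity F(ρ,σ) = (Tr√(√ρ σ √ρ))². -/
open scoped ComplexOrder

open scoped MatrixOrder in
/-- The fidelity `F(ρ,σ) = (Tr √(√ρ σ √ρ))²` of two positive semidefinite
matrices (here `√ρ σ (√ρ)ᴴ = √ρ σ √ρ` since `√ρ` is Hermitian). -/
noncomputable def fid {N : ℕ} (ρ σ : Matrix (Fin N) (Fin N) ℂ)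
    (hρ : ρ.PosSemidef) (hσ : σ.PosSemidef) : ℝ :=
  ((CFC.sqrt (CFC.sqrt ρ * σ * Matrix.conjTranspose (CFC.sqrt ρ))).trace).re ^ 2

/-! Put `a = √ρ`, `b = √σ`, `c = √ξ` and regard matrices as vectors of the Hilbert–Schmidt
space, `⟪A, B⟫ = Tr (Aᴴ B)`. Polar decomposition `c a = W |c a|` with `W` unitary gives a unit
vector `W a` with `⟪W a, c⟫ = Tr |c a| = √F(ρ,ξ)`, and likewise `W' b` for `σ`. For any unitaries,
`|⟪W a, W' b⟫| = |Tr (U |b a|)|` for some unitary `U`, which is at most `Tr |b a| = √F(ρ,σ)`.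
This reduces the claim to unit vectors `u, v, w`, where
`|⟪u,w⟫|² + |⟪v,w⟫|² ≤ 1 + |⟪u,v⟫|` follows by testing `w` against `⟪u,w⟫ u + ⟪v,w⟫ v`. -/

open scoped MatrixOrder InnerProductSpace
open Matrix

theorem norm_inner_sq_add_norm_inner_sq_le {𝕜 E : Type*} [RCLike 𝕜] [NormedAddCommGroup E]
    [InnerProductSpace 𝕜 E] {u v w : E} (hu : ‖u‖ ≤ 1) (hv : ‖v‖ ≤ 1)
    (hw : ‖w‖ ≤ 1) : ‖⟪u, w⟫_𝕜‖ ^ 2 + ‖⟪v, w⟫_𝕜‖ ^ 2 ≤ 1 + ‖⟪u, v⟫_𝕜‖ := by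
  set x := ⟪u, w⟫_𝕜
  set y := ⟪v, w⟫_𝕜
  set c := ‖⟪u, v⟫_𝕜‖
  set s := ‖x‖ ^ 2 + ‖y‖ ^ 2
  -- Test `w` against `z = x u + y v`: `⟪z, w⟫ = s`, while `‖z‖² ≤ s (1 + c)`.
  set z := x • u + y • v
  have hzw : ⟪z, w⟫_𝕜 = (s : 𝕜) := by
    simp only [z, s, x, y, inner_add_left, inner_smul_left, RCLike.conj_mul]
    push_cast
    ring
  have hsz : s ≤ ‖z‖ :=
    calc s = ‖⟪z, w⟫_𝕜‖ := by rw [hzw, RCLike.norm_ofReal, abs_of_nonneg (by positivity)]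
      _ ≤ ‖z‖ * ‖w‖ := norm_inner_le_norm z w
      _ ≤ ‖z‖ := mul_le_of_le_one_right (norm_nonneg z) hw
  have hxu : ‖x • u‖ ≤ ‖x‖ := by
    rw [norm_smul]
    exact mul_le_of_le_one_right (norm_nonneg x) hu
  have hyv : ‖y • v‖ ≤ ‖y‖ := by
    rw [norm_smul]
    exact mul_le_of_le_one_right (norm_nonneg y) hv
  have hcross : RCLike.re ⟪x • u, y • v⟫_𝕜 ≤ ‖x‖ * ‖y‖ * c :=
    calc RCLike.re ⟪x • u, y • v⟫_𝕜 ≤ ‖⟪x • u, y • v⟫_𝕜‖ := RCLike.re_le_norm _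
      _ = ‖x‖ * ‖y‖ * c := by
        rw [inner_smul_left, inner_smul_right, norm_mul, norm_mul, RCLike.norm_conj, mul_assoc]
  have hz : ‖z‖ ^ 2 ≤ s * (1 + c) := by
    rw [norm_add_sq (𝕜 := 𝕜)]
    nlinarith [sq_nonneg (‖x‖ - ‖y‖), norm_nonneg (x • u), norm_nonneg (y • v),
      norm_nonneg ⟪u, v⟫_𝕜]
  nlinarith [norm_nonneg ⟪u, v⟫_𝕜]

theorem LinearMap.exists_linearIsometryEquiv_apply_eq_of_norm_eq {𝕜 V : Type*} [RCLike 𝕜]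
    [NormedAddCommGroup V] [InnerProductSpace 𝕜 V] [FiniteDimensional 𝕜 V] {f g : V →ₗ[𝕜] V}
    (h : ∀ x, ‖f x‖ = ‖g x‖) : ∃ e : V ≃ₗᵢ[𝕜] V, ∀ x, e (g x) = f x := by
  have hker : LinearMap.ker g ≤ LinearMap.ker f := fun x hx ↦ by
    rw [LinearMap.mem_ker, ← norm_eq_zero, h, norm_eq_zero, ← LinearMap.mem_ker]
    exact hx
  let ℓ : LinearMap.range g →ₗ[𝕜] V :=
    (LinearMap.ker g).liftQ f hker ∘ₗ g.quotKerEquivRange.symm.toLinearMap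
  have hℓ (x : V) : ℓ ⟨g x, LinearMap.mem_range_self g x⟩ = f x := by
    simp [ℓ, LinearMap.quotKerEquivRange_symm_apply_image]
  let L : LinearMap.range g →ₗᵢ[𝕜] V :=
    ⟨ℓ, by rintro ⟨-, x, rfl⟩; simp only [hℓ, h, Submodule.coe_norm]⟩
  refine ⟨L.extend.toLinearIsometryEquiv rfl, fun x ↦ ?_⟩
  exact (L.extend_apply ⟨g x, LinearMap.mem_range_self g x⟩).trans (hℓ x)

namespace Matrix

variable {n 𝕜 : Type*} [Fintype n] [RCLike 𝕜]

noncomputable def hilbertSchmidtVec (A : Matrix n n 𝕜) : EuclideanSpace 𝕜 (n × n) :=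
  WithLp.toLp 2 (Function.uncurry A)

theorem inner_hilbertSchmidtVec (A B : Matrix n n 𝕜) :
    ⟪A.hilbertSchmidtVec, B.hilbertSchmidtVec⟫_𝕜 = (Aᴴ * B).trace := by
  simp only [hilbertSchmidtVec, PiLp.inner_apply, RCLike.inner_apply, Function.uncurry,
    trace, diag, mul_apply, conjTranspose_apply, Fintype.sum_prod_type, RCLike.star_def]
  rw [Finset.sum_comm]
  simp only [mul_comm]

theorem norm_hilbertSchmidtVec_sq (A : Matrix n n 𝕜) :
    ‖A.hilbertSchmidtVec‖ ^ 2 = RCLike.re (Aᴴ * A).trace := by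
  rw [← inner_self_eq_norm_sq (𝕜 := 𝕜), inner_hilbertSchmidtVec]

variable [DecidableEq n]

theorem norm_hilbertSchmidtVec_unitary_mul {U : Matrix n n 𝕜} (hU : U ∈ unitaryGroup n 𝕜)
    (A : Matrix n n 𝕜) : ‖(U * A).hilbertSchmidtVec‖ = ‖A.hilbertSchmidtVec‖ := by
  have hUU : Uᴴ * U = 1 := Unitary.star_mul_self_of_mem hU
  rw [← sq_eq_sq₀ (norm_nonneg _) (norm_nonneg _), norm_hilbertSchmidtVec_sq,
    norm_hilbertSchmidtVec_sq, conjTranspose_mul, Matrix.mul_assoc, ← Matrix.mul_assoc Uᴴ, hUU,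
    Matrix.one_mul]

theorem norm_hilbertSchmidtVec_cfcSqrt {τ : Matrix n n 𝕜} (hτ : 0 ≤ τ) (hτ1 : τ.trace = 1) :
    ‖(CFC.sqrt τ).hilbertSchmidtVec‖ = 1 := by
  rw [← sq_eq_sq₀ (norm_nonneg _) zero_le_one, norm_hilbertSchmidtVec_sq,
    ← star_eq_conjTranspose, (CFC.sqrt_nonneg τ).isSelfAdjoint.star_eq, CFC.sqrt_mul_sqrt_self τ,
    hτ1, RCLike.one_re, one_pow]

theorem norm_trace_unitary_mul_le {U P : Matrix n n 𝕜} (hU : U ∈ unitaryGroup n 𝕜) (hP : 0 ≤ P) :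
    ‖(U * P).trace‖ ≤ ‖P.trace‖ := by
  obtain ⟨B, rfl⟩ := CStarAlgebra.nonneg_iff_eq_star_mul_self.mp hP
  rw [star_eq_conjTranspose]
  have hinner : (U * (Bᴴ * B)).trace = ⟪Bᴴ.hilbertSchmidtVec, (U * Bᴴ).hilbertSchmidtVec⟫_𝕜 := by
    rw [inner_hilbertSchmidtVec, conjTranspose_conjTranspose, ← Matrix.mul_assoc,
      trace_mul_comm]
  calc ‖(U * (Bᴴ * B)).trace‖
      ≤ ‖Bᴴ.hilbertSchmidtVec‖ * ‖(U * Bᴴ).hilbertSchmidtVec‖ :=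
        hinner ▸ norm_inner_le_norm _ _
    _ = RCLike.re (B * Bᴴ).trace := by
        rw [norm_hilbertSchmidtVec_unitary_mul hU, ← sq, norm_hilbertSchmidtVec_sq,
          conjTranspose_conjTranspose]
    _ ≤ ‖(Bᴴ * B).trace‖ := trace_mul_comm B Bᴴ ▸ RCLike.re_le_norm _

theorem norm_toEuclideanCLM_cfcAbs_apply (M : Matrix n n 𝕜) (x : EuclideanSpace 𝕜 n) :
    ‖toEuclideanCLM (n := n) (𝕜 := 𝕜) (CFC.abs M) x‖ = ‖toEuclideanCLM (n := n) (𝕜 := 𝕜) M x‖ := by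
  have hsq (A : Matrix n n 𝕜) : ‖toEuclideanCLM (n := n) (𝕜 := 𝕜) A x‖ ^ 2 =
      RCLike.re ⟪toEuclideanCLM (n := n) (𝕜 := 𝕜) (star A * A) x, x⟫_𝕜 := by
    rw [ContinuousLinearMap.apply_norm_sq_eq_inner_adjoint_left, map_mul, map_star,
      ContinuousLinearMap.star_eq_adjoint]
    rfl
  rw [← sq_eq_sq₀ (norm_nonneg _) (norm_nonneg _), hsq, hsq,
    (CFC.abs_nonneg M).isSelfAdjoint.star_eq, CFC.abs_mul_abs]

theorem exists_mem_unitaryGroup_eq_mul_cfcAbs (M : Matrix n n 𝕜) :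
    ∃ U ∈ unitaryGroup n 𝕜, M = U * CFC.abs M := by
  obtain ⟨e, he⟩ := LinearMap.exists_linearIsometryEquiv_apply_eq_of_norm_eq
    (f := (toEuclideanCLM (n := n) (𝕜 := 𝕜) M : EuclideanSpace 𝕜 n →ₗ[𝕜] EuclideanSpace 𝕜 n))
    (g := toEuclideanCLM (n := n) (𝕜 := 𝕜) (CFC.abs M))
    fun x ↦ (norm_toEuclideanCLM_cfcAbs_apply M x).symm
  refine ⟨(toEuclideanCLM (n := n) (𝕜 := 𝕜)).symm (Unitary.linearIsometryEquiv.symm e),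
    Unitary.map_mem _ (Unitary.linearIsometryEquiv.symm e).prop, ?_⟩
  apply EquivLike.injective (toEuclideanCLM (n := n) (𝕜 := 𝕜))
  rw [map_mul, StarAlgEquiv.apply_symm_apply]
  ext1 x
  exact (he x).symm

theorem exists_inner_hilbertSchmidtVec_unitary_mul_eq (A C : Matrix n n 𝕜) :
    ∃ W ∈ unitaryGroup n 𝕜,
      ⟪(W * A).hilbertSchmidtVec, C.hilbertSchmidtVec⟫_𝕜 = (CFC.abs (C * Aᴴ)).trace := by
  obtain ⟨W, hW, hpolar⟩ := exists_mem_unitaryGroup_eq_mul_cfcAbs (C * Aᴴ)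
  refine ⟨W, hW, ?_⟩
  rw [inner_hilbertSchmidtVec, conjTranspose_mul, Matrix.mul_assoc, trace_mul_comm,
    Matrix.mul_assoc]
  conv_lhs => rw [hpolar]
  rw [← Matrix.mul_assoc, ← star_eq_conjTranspose, Unitary.star_mul_self_of_mem hW,
    Matrix.one_mul]

theorem norm_inner_hilbertSchmidtVec_unitary_mul_le {W₁ W₂ : Matrix n n 𝕜}
    (hW₁ : W₁ ∈ unitaryGroup n 𝕜) (hW₂ : W₂ ∈ unitaryGroup n 𝕜) (A B : Matrix n n 𝕜) :
    ‖⟪(W₁ * A).hilbertSchmidtVec, (W₂ * B).hilbertSchmidtVec⟫_𝕜‖ ≤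
      ‖(CFC.abs (B * Aᴴ)).trace‖ := by
  obtain ⟨W₃, hW₃, hpolar⟩ := exists_mem_unitaryGroup_eq_mul_cfcAbs (B * Aᴴ)
  have hinner : ⟪(W₁ * A).hilbertSchmidtVec, (W₂ * B).hilbertSchmidtVec⟫_𝕜 =
      (star W₁ * W₂ * W₃ * CFC.abs (B * Aᴴ)).trace := by
    rw [inner_hilbertSchmidtVec, conjTranspose_mul, Matrix.mul_assoc, trace_mul_comm,
      star_eq_conjTranspose]
    simp only [Matrix.mul_assoc]
    conv_lhs => rw [hpolar]
  rw [hinner]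
  exact norm_trace_unitary_mul_le (mul_mem (mul_mem (Unitary.star_mem hW₁) hW₂) hW₃)
    (CFC.abs_nonneg _)

theorem cfcSqrt_mul_mul_conjTranspose {σ : Matrix n n 𝕜} (hσ : 0 ≤ σ) (X : Matrix n n 𝕜) :
    CFC.sqrt (X * σ * Xᴴ) = CFC.abs (CFC.sqrt σ * Xᴴ) := by
  rw [CFC.abs, star_mul, star_eq_conjTranspose Xᴴ, conjTranspose_conjTranspose,
    (CFC.sqrt_nonneg σ).isSelfAdjoint.star_eq, ← Matrix.mul_assoc,
    Matrix.mul_assoc X (CFC.sqrt σ), CFC.sqrt_mul_sqrt_self σ]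

end Matrix

theorem fid_eq_norm_trace_cfcAbs_sq {N : ℕ} {ρ σ : Matrix (Fin N) (Fin N) ℂ}
    (hρ : ρ.PosSemidef) (hσ : σ.PosSemidef) :
    fid ρ σ hρ hσ = ‖(CFC.abs (CFC.sqrt σ * (CFC.sqrt ρ)ᴴ)).trace‖ ^ 2 := by
  rw [fid, cfcSqrt_mul_mul_conjTranspose hσ.nonneg]
  have htr := (nonneg_iff_posSemidef.mp (CFC.abs_nonneg (CFC.sqrt σ * (CFC.sqrt ρ)ᴴ))).trace_nonneg
  rw [← Complex.ofReal_re ‖_‖, Complex.norm_of_nonneg' htr]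

/-- Nayak–Salzman: for density matrices `ρ, σ, ξ`,
`F(ρ,ξ) + F(σ,ξ) ≤ 1 + √F(ρ,σ)`. -/
theorem stmt14 {N : ℕ} (ρ σ ξ : Matrix (Fin N) (Fin N) ℂ)
    (hρ : ρ.PosSemidef) (hσ : σ.PosSemidef) (hξ : ξ.PosSemidef)
    (hρ1 : ρ.trace = 1) (hσ1 : σ.trace = 1) (hξ1 : ξ.trace = 1) :
    fid ρ ξ hρ hξ + fid σ ξ hσ hξ ≤ 1 + Real.sqrt (fid ρ σ hρ hσ) := by
  obtain ⟨W₁, hW₁, hρξ⟩ :=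
    exists_inner_hilbertSchmidtVec_unitary_mul_eq (CFC.sqrt ρ) (CFC.sqrt ξ)
  obtain ⟨W₂, hW₂, hσξ⟩ :=
    exists_inner_hilbertSchmidtVec_unitary_mul_eq (CFC.sqrt σ) (CFC.sqrt ξ)
  have hu : ‖(W₁ * CFC.sqrt ρ).hilbertSchmidtVec‖ ≤ 1 := by
    rw [norm_hilbertSchmidtVec_unitary_mul hW₁, norm_hilbertSchmidtVec_cfcSqrt hρ.nonneg hρ1]
  have hv : ‖(W₂ * CFC.sqrt σ).hilbertSchmidtVec‖ ≤ 1 := by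
    rw [norm_hilbertSchmidtVec_unitary_mul hW₂, norm_hilbertSchmidtVec_cfcSqrt hσ.nonneg hσ1]
  have hw : ‖(CFC.sqrt ξ).hilbertSchmidtVec‖ ≤ 1 :=
    (norm_hilbertSchmidtVec_cfcSqrt hξ.nonneg hξ1).le
  rw [fid_eq_norm_trace_cfcAbs_sq, fid_eq_norm_trace_cfcAbs_sq, fid_eq_norm_trace_cfcAbs_sq,
    Real.sqrt_sq (norm_nonneg _), ← hρξ, ← hσξ]
  refine (norm_inner_sq_add_norm_inner_sq_le hu hv hw).trans ?_
  gcongr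
  exact norm_inner_hilbertSchmidtVec_unitary_mul_le hW₁ hW₂ _ _
end

section
/- Let ρ_x = E_{|ψ⟩←Haar(2^n)}[(Z^x ⊗ I^{⊗m})|ψ⟩⟨ψ|^{⊗(m+1)}(Z^x ⊗ I^{⊗m})] for x ∈ {0,1}^n, and let σ = Σ_{x∈{0,1}^n} ρ_x. Then the operator norm of σ^{−1/2} ρ_x σ^{−1/2} (on the support of σ) satisfies ‖σ^{−1/2} ρ_x σ^{−1/2}‖ ≤ ‖σ^{−1/2}‖² · ‖E_{T}|T⟩⟨T|‖ = (C(d+m, m+1)·(m+1)/d) · (1/C(d+m, m+1)) = (m+1)/d, where d = 2^n and the expectation is over uniform types T ∈ [0:m+1]^d. Consequently Tr(ρ_x σ^{−1/2} ρ_x σ^{−1/2}) ≤ (m+1)/d for every x. -/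
/-!
Write `ρ_x = c • ∑_M |v_{x,M}⟩⟨v_{x,M}|` with `v_{x,M} = (Z^x ⊗ I^{⊗m})|M⟩`. For a test vector `y`,
`⟨v_{x,M}|y⟩` is the Walsh transform at `x` of the function `j ↦ ⟨M|(|j⟩⟨j| ⊗ I^{⊗m})|y⟩`, which is
supported on the at most `m+1` letters of `M`. Cauchy–Schwarz bounds its square by `m+1` times the
`ℓ²` mass of that function, and by Parseval this mass is `2^{-n}` times the sum over all `x'` of
the squared transforms; hence `2^n ρ_x ⪯ (m+1) σ`. Conjugating by `S` gives
`S ρ_x S ⪯ (m+1)/2^n • P ⪯ (m+1)/2^n`, which bounds the eigenvalues, and the trace bound follows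
because the type states have norm at most one, so that `Tr ρ_x ≤ 1`.
-/

noncomputable section

/-- The general type state `|M⟩` of a multiset `M` of size `m+1` over the alphabet
`α = {0,1}^n`: coefficient `√(∏_a (count_M a)!)/√((m+1)!)` on each tuple whose
multiset of entries is `M`, and `0` elsewhere. -/
def genTypeState {n m : ℕ} (M : Sym (Fin n → ZMod 2) (m + 1)) :
    (Fin (m + 1) → Fin n → ZMod 2) → ℝ := fun u =>
  if Multiset.map u Finset.univ.val = (M : Multiset (Fin n → ZMod 2)) then
    Real.sqrt (∏ a ∈ (M : Multiset (Fin n → ZMod 2)).toFinset,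
        Nat.factorial ((M : Multiset (Fin n → ZMod 2)).count a))
      / Real.sqrt (Nat.factorial (m + 1)) else 0

/-- The sign picked up by `Z^x ⊗ I^{⊗m}` on the computational-basis tuple `u`
(acting on the first of the `m+1` registers). -/
def zxSign {n m : ℕ} (x : Fin n → ZMod 2) (u : Fin (m + 1) → Fin n → ZMod 2) : ℝ :=
  (-1 : ℝ) ^ (∑ j : Fin n, x j * u 0 j).val

/-- `ρ_x = (Z^x ⊗ I^{⊗m}) E_{|ψ⟩←Haar}[|ψ⟩⟨ψ|^{⊗(m+1)}] (Z^x ⊗ I^{⊗m})`, using the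
identity of the Haar average with the normalized uniform mixture of type states
over all types in `[0:m+1]^d`, `d = 2^n`. -/
def rhoX (n m : ℕ) (x : Fin n → ZMod 2) :
    Matrix (Fin (m + 1) → Fin n → ZMod 2) (Fin (m + 1) → Fin n → ZMod 2) ℝ :=
  (((2 ^ n + m).choose (m + 1) : ℝ))⁻¹ • ∑ M : Sym (Fin n → ZMod 2) (m + 1),
    Matrix.of fun u w => (zxSign x u * genTypeState M u) * (zxSign x w * genTypeState M w)

/-- `σ = Σ_{x ∈ {0,1}^n} ρ_x`. -/
def sigmaX (n m : ℕ) :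
    Matrix (Fin (m + 1) → Fin n → ZMod 2) (Fin (m + 1) → Fin n → ZMod 2) ℝ :=
  ∑ x : Fin n → ZMod 2, rhoX n m x

open Matrix

section Tuples

variable {α : Type*} {k : ℕ}

lemma exists_perm_eq_comp_of_map_univ_eq {u w : Fin k → α}
    (h : Multiset.map u Finset.univ.val = Multiset.map w Finset.univ.val) :
    ∃ σ : Equiv.Perm (Fin k), u = w ∘ σ := by
  let _ : LinearOrder α := IsWellOrder.linearOrder WellOrderingRel
  have hperm : List.Perm (List.ofFn (u ∘ Tuple.sort u)) (List.ofFn (w ∘ Tuple.sort w)) := by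
    rw [Fin.univ_val_map, Fin.univ_val_map, Multiset.coe_eq_coe] at h
    exact ((Tuple.sort u).ofFn_comp_perm u).trans (h.trans ((Tuple.sort w).ofFn_comp_perm w).symm)
  have hsorted : u ∘ Tuple.sort u = w ∘ Tuple.sort w :=
    List.ofFn_injective (hperm.eq_of_sortedLE (Tuple.monotone_sort u).sortedLE_ofFn
      (Tuple.monotone_sort w).sortedLE_ofFn)
  refine ⟨(Tuple.sort u).symm.trans (Tuple.sort w), funext fun i => ?_⟩
  simpa using congrFun hsorted ((Tuple.sort u).symm i)

variable [Fintype α] [DecidableEq α]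

lemma card_map_univ_eq_mul_prod_factorial_le (M : Multiset α) :
    Fintype.card {u : Fin k → α // Multiset.map u Finset.univ.val = M} *
      ∏ a ∈ M.toFinset, (M.count a).factorial ≤ k.factorial := by
  rcases isEmpty_or_nonempty {u : Fin k → α // Multiset.map u Finset.univ.val = M} with
    hempty | ⟨⟨u₀, hu₀⟩⟩
  · rw [Fintype.card_eq_zero, zero_mul]
    exact Nat.zero_le _
  choose s hs using fun u : {u : Fin k → α // Multiset.map u Finset.univ.val = M} =>
    exists_perm_eq_comp_of_map_univ_eq (u.prop.trans hu₀.symm)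
  have hfiber (a : α) : Fintype.card {i // u₀ i = a} = M.count a := by
    rw [← hu₀, Multiset.count_map, Fintype.card_subtype, Finset.card, Finset.filter_val]
    exact congrArg _ (Multiset.filter_congr fun _ _ => eq_comm)
  have hstab : Fintype.card {g : Equiv.Perm (Fin k) // u₀ ∘ g = u₀} =
      ∏ a ∈ M.toFinset, (M.count a).factorial := by
    have hcount (a : α) (ha : a ∉ M.toFinset) : (M.count a).factorial = 1 := by
      rw [Multiset.count_eq_zero_of_notMem (by simpa using ha), Nat.factorial_zero]
    rw [DomMulAct.stabilizer_card,
      Finset.prod_subset (Finset.subset_univ M.toFinset) fun a _ => hcount a]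
    simp only [hfiber]
  -- `u` is recovered from `g * s u` as `u₀ ∘ (g * s u)`
  have hinj : Function.Injective fun p : {u : Fin k → α // Multiset.map u Finset.univ.val = M} ×
      {g : Equiv.Perm (Fin k) // u₀ ∘ g = u₀} => p.2.1 * s p.1 := by
    have hrecover (u) (g : {g : Equiv.Perm (Fin k) // u₀ ∘ g = u₀}) :
        u₀ ∘ ⇑(g.1 * s u) = u := by
      rw [Equiv.Perm.coe_mul, ← Function.comp_assoc, g.2, ← hs]
    rintro ⟨u, g⟩ ⟨u', g'⟩ (h : g.1 * s u = g'.1 * s u')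
    obtain rfl : u = u' := Subtype.ext (by rw [← hrecover u g, ← hrecover u' g', h])
    simpa [Subtype.ext_iff] using h
  simpa [hstab, Fintype.card_perm] using Fintype.card_le_of_injective _ hinj

end Tuples

section Walsh

variable {ι : Type*} [Fintype ι]

def walshChar (j : ι → ZMod 2) : AddChar (ι → ZMod 2) ℝ :=
  (AddChar.zmodChar 2 (by norm_num : (-1 : ℝ) ^ 2 = 1)).compAddMonoidHom
    (AddMonoidHom.mk' (· ⬝ᵥ j) fun a b => add_dotProduct a b j)

lemma walshChar_apply (j x : ι → ZMod 2) : walshChar j x = (-1) ^ (x ⬝ᵥ j).val := rfl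

lemma walshChar_add (j k x : ι → ZMod 2) :
    walshChar (j + k) x = walshChar j x * walshChar k x := by
  simp only [walshChar, AddChar.compAddMonoidHom_apply, AddMonoidHom.mk'_apply, dotProduct_add,
    AddChar.map_add_eq_mul]

lemma walshChar_sq (j x : ι → ZMod 2) : walshChar j x ^ 2 = 1 := by
  rw [sq, ← walshChar_add, ZModModule.add_self, walshChar_apply, dotProduct_zero, ZMod.val_zero,
    pow_zero]

lemma walshChar_eq_zero_iff {j : ι → ZMod 2} : walshChar j = 0 ↔ j = 0 := by
  classical
  refine ⟨fun h => ?_, fun h => by ext x; simp [h, walshChar_apply]⟩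
  by_contra hj
  obtain ⟨i, hi⟩ := Function.ne_iff.mp hj
  have hone : j i = 1 := (by decide : ∀ a : ZMod 2, a ≠ 0 → a = 1) _ hi
  have := DFunLike.congr_fun h (Pi.single i 1)
  rw [walshChar_apply, single_dotProduct, one_mul, hone] at this
  norm_num [show (1 : ZMod 2).val = 1 from rfl] at this

lemma sum_walshChar_mul_walshChar [DecidableEq ι] (j k : ι → ZMod 2) :
    ∑ x, walshChar j x * walshChar k x = if j = k then (2 : ℝ) ^ Fintype.card ι else 0 := by
  simp_rw [← walshChar_add, AddChar.sum_eq_ite, walshChar_eq_zero_iff, ← ZModModule.sub_eq_add,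
    sub_eq_zero]
  simp [ZMod.card]

lemma sum_sq_sum_walshChar_mul [DecidableEq ι] (a : (ι → ZMod 2) → ℝ) :
    ∑ x, (∑ j, walshChar j x * a j) ^ 2 = 2 ^ Fintype.card ι * ∑ j, a j ^ 2 := by
  calc ∑ x, (∑ j, walshChar j x * a j) ^ 2
      = ∑ j, ∑ k, a j * a k * ∑ x, walshChar j x * walshChar k x := by
        simp_rw [sq, Finset.sum_mul_sum, Finset.mul_sum]
        rw [Finset.sum_comm]
        refine Finset.sum_congr rfl fun j _ => ?_
        rw [Finset.sum_comm]
        exact Finset.sum_congr rfl fun k _ => Finset.sum_congr rfl fun x _ => by ring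
    _ = 2 ^ Fintype.card ι * ∑ j, a j ^ 2 := by
        simp [sum_walshChar_mul_walshChar, Finset.mul_sum, sq, mul_comm]

lemma two_pow_mul_sq_sum_walshChar_mul_le [DecidableEq ι] {a : (ι → ZMod 2) → ℝ}
    {s : Finset (ι → ZMod 2)} (ha : ∀ j ∉ s, a j = 0) (x : ι → ZMod 2) :
    2 ^ Fintype.card ι * (∑ j, walshChar j x * a j) ^ 2 ≤
      s.card * ∑ y, (∑ j, walshChar j y * a j) ^ 2 := by
  rw [sum_sq_sum_walshChar_mul, mul_left_comm]
  gcongr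
  have sum_eq_sum_of_support {f : (ι → ZMod 2) → ℝ} (hf : ∀ j ∉ s, f j = 0) :
      ∑ j, f j = ∑ j ∈ s, f j :=
    (Finset.sum_subset (Finset.subset_univ s) fun j _ hj => hf j hj).symm
  calc (∑ j, walshChar j x * a j) ^ 2 = (∑ j ∈ s, walshChar j x * a j) ^ 2 := by
        rw [sum_eq_sum_of_support fun j hj => by rw [ha j hj, mul_zero]]
    _ ≤ s.card * ∑ j ∈ s, (walshChar j x * a j) ^ 2 := sq_sum_le_card_mul_sum_sq
    _ = s.card * ∑ j, a j ^ 2 := by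
        simp_rw [mul_pow, walshChar_sq, one_mul]
        rw [sum_eq_sum_of_support fun j hj => by rw [ha j hj, sq, mul_zero]]

end Walsh

section RealQuadraticForms

variable {ι : Type*} [Fintype ι]

lemma Matrix.IsHermitian.dotProduct_mulVec_comm {S : Matrix ι ι ℝ} (hS : S.IsHermitian)
    (v w : ι → ℝ) : v ⬝ᵥ (S *ᵥ w) = (S *ᵥ v) ⬝ᵥ w := by
  rw [dotProduct_mulVec, ← mulVec_transpose, ← conjTranspose_eq_transpose_of_trivial, hS.eq]

lemma dotProduct_vecMulVec_self_mulVec (a y : ι → ℝ) :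
    y ⬝ᵥ (vecMulVec a a *ᵥ y) = (a ⬝ᵥ y) ^ 2 := by
  rw [vecMulVec_mulVec, op_smul_eq_smul, dotProduct_smul, smul_eq_mul, dotProduct_comm, sq]

lemma trace_vecMulVec_self_mul (v : ι → ℝ) (H : Matrix ι ι ℝ) :
    (vecMulVec v v * H).trace = v ⬝ᵥ (H *ᵥ v) := by
  rw [vecMulVec_mul, trace_vecMulVec, dotProduct_mulVec, dotProduct_comm]

variable [DecidableEq ι]

lemma Matrix.IsHermitian.dotProduct_mulVec_le_of_isIdempotentElem {P : Matrix ι ι ℝ}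
    (hP : P.IsHermitian) (hPP : IsIdempotentElem P) (y : ι → ℝ) :
    y ⬝ᵥ (P *ᵥ y) ≤ y ⬝ᵥ y := by
  have hQ : (1 - P)ᴴ * (1 - P) = 1 - P := by
    rw [conjTranspose_sub, conjTranspose_one, hP.eq, hPP.one_sub.eq]
  have := (posSemidef_conjTranspose_mul_self (1 - P)).dotProduct_mulVec_nonneg y
  rw [hQ, star_trivial, sub_mulVec, one_mulVec, dotProduct_sub] at this
  linarith

lemma Matrix.IsHermitian.eigenvalues_le {H : Matrix ι ι ℝ} (hH : H.IsHermitian) {t : ℝ}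
    (h : ∀ y, y ⬝ᵥ (H *ᵥ y) ≤ t * (y ⬝ᵥ y)) (i : ι) : hH.eigenvalues i ≤ t := by
  set v := hH.eigenvectorBasis i
  have hv : v.ofLp ⬝ᵥ v.ofLp = 1 := by
    have := EuclideanSpace.inner_eq_star_dotProduct v v
    rwa [star_trivial, real_inner_self_eq_norm_sq, hH.eigenvectorBasis.orthonormal.1 i, one_pow,
      eq_comm] at this
  simpa [hH.eigenvalues_eq, hv] using h v.ofLp

lemma dotProduct_mul_mul_mulVec_le {S A B P : Matrix ι ι ℝ} {t : ℝ} (ht : 0 ≤ t)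
    (hS : S.IsHermitian) (hAB : ∀ z, z ⬝ᵥ (A *ᵥ z) ≤ t * (z ⬝ᵥ (B *ᵥ z)))
    (hSBS : S * B * S = P) (hP : P.IsHermitian) (hPP : IsIdempotentElem P) (y : ι → ℝ) :
    y ⬝ᵥ ((S * A * S) *ᵥ y) ≤ t * (y ⬝ᵥ y) := by
  have hconj (C : Matrix ι ι ℝ) : y ⬝ᵥ ((S * C * S) *ᵥ y) = (S *ᵥ y) ⬝ᵥ (C *ᵥ (S *ᵥ y)) := by
    rw [← mulVec_mulVec, ← mulVec_mulVec, hS.dotProduct_mulVec_comm]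
  calc y ⬝ᵥ ((S * A * S) *ᵥ y) ≤ t * (y ⬝ᵥ (P *ᵥ y)) := by
        rw [hconj, ← hSBS, hconj]
        exact hAB _
    _ ≤ t * (y ⬝ᵥ y) := by
        gcongr
        exact hP.dotProduct_mulVec_le_of_isIdempotentElem hPP y

end RealQuadraticForms

section TypeStates

variable {n m : ℕ}

lemma genTypeState_eq_zero_of_notMem {M : Sym (Fin n → ZMod 2) (m + 1)}
    {u : Fin (m + 1) → Fin n → ZMod 2} (hu : u 0 ∉ (M : Multiset (Fin n → ZMod 2))) :
    genTypeState M u = 0 := by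
  refine if_neg fun h => hu ?_
  rw [← h]
  exact Multiset.mem_map_of_mem u (Finset.mem_univ (0 : Fin (m + 1)))

lemma sum_sq_genTypeState_le_one (M : Sym (Fin n → ZMod 2) (m + 1)) :
    ∑ u, genTypeState M u ^ 2 ≤ 1 := by
  set M' : Multiset (Fin n → ZMod 2) := ↑M
  have hsq (u : Fin (m + 1) → Fin n → ZMod 2) : genTypeState M u ^ 2 =
      if Multiset.map u Finset.univ.val = M' then
        ((∏ a ∈ M'.toFinset, (M'.count a).factorial : ℕ) : ℝ) / ((m + 1).factorial : ℕ)
      else 0 := by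
    unfold genTypeState
    split_ifs
    · rw [div_pow, Real.sq_sqrt (by positivity), Real.sq_sqrt (by positivity)]
      push_cast
      rfl
    · exact zero_pow two_ne_zero
  simp_rw [hsq]
  rw [Finset.sum_ite, Finset.sum_const_zero, add_zero, Finset.sum_const, nsmul_eq_mul,
    ← Fintype.card_subtype, mul_div_assoc', div_le_one (by positivity)]
  exact_mod_cast card_map_univ_eq_mul_prod_factorial_le M'

lemma card_sym_eq_choose :
    Fintype.card (Sym (Fin n → ZMod 2) (m + 1)) = (2 ^ n + m).choose (m + 1) := by
  rw [Sym.card_sym_eq_choose, Fintype.card_fun, ZMod.card, Fintype.card_fin]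
  congr 1

lemma zxSign_eq_walshChar (x : Fin n → ZMod 2) (u : Fin (m + 1) → Fin n → ZMod 2) :
    zxSign x u = walshChar (u 0) x := rfl

def zxTypeState (x : Fin n → ZMod 2) (M : Sym (Fin n → ZMod 2) (m + 1)) :
    (Fin (m + 1) → Fin n → ZMod 2) → ℝ :=
  fun u => zxSign x u * genTypeState M u

lemma rhoX_eq_smul_sum_vecMulVec (x : Fin n → ZMod 2) :
    rhoX n m x = (((2 ^ n + m).choose (m + 1) : ℝ))⁻¹ •
      ∑ M, vecMulVec (zxTypeState x M) (zxTypeState x M) := rfl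

lemma zxTypeState_dotProduct_self_le_one (x : Fin n → ZMod 2)
    (M : Sym (Fin n → ZMod 2) (m + 1)) :
    zxTypeState x M ⬝ᵥ zxTypeState x M ≤ 1 := by
  calc zxTypeState x M ⬝ᵥ zxTypeState x M = ∑ u, genTypeState M u ^ 2 := by
        refine Finset.sum_congr rfl fun u _ => ?_
        rw [zxTypeState, zxSign_eq_walshChar, mul_mul_mul_comm, ← sq, walshChar_sq, one_mul, sq]
    _ ≤ 1 := sum_sq_genTypeState_le_one M

-- `⟨M|(|j⟩⟨j| ⊗ I^{⊗m})|y⟩`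
def firstRegisterOverlap (M : Sym (Fin n → ZMod 2) (m + 1))
    (y : (Fin (m + 1) → Fin n → ZMod 2) → ℝ) (j : Fin n → ZMod 2) : ℝ :=
  ∑ u with u 0 = j, genTypeState M u * y u

lemma firstRegisterOverlap_eq_zero {M : Sym (Fin n → ZMod 2) (m + 1)}
    (y : (Fin (m + 1) → Fin n → ZMod 2) → ℝ) {j : Fin n → ZMod 2}
    (hj : j ∉ (M : Multiset (Fin n → ZMod 2)).toFinset) : firstRegisterOverlap M y j = 0 :=
  Finset.sum_eq_zero fun u hu => by
    rw [genTypeState_eq_zero_of_notMem, zero_mul]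
    rwa [(Finset.mem_filter.mp hu).2, ← Multiset.mem_toFinset]

lemma zxTypeState_dotProduct (x : Fin n → ZMod 2) (M : Sym (Fin n → ZMod 2) (m + 1))
    (y : (Fin (m + 1) → Fin n → ZMod 2) → ℝ) :
    zxTypeState x M ⬝ᵥ y = ∑ j, walshChar j x * firstRegisterOverlap M y j := by
  rw [dotProduct, ← Finset.sum_fiberwise Finset.univ (fun u => u 0)]
  refine Finset.sum_congr rfl fun j _ => ?_
  rw [firstRegisterOverlap, Finset.mul_sum]
  refine Finset.sum_congr rfl fun u hu => ?_
  rw [zxTypeState, zxSign_eq_walshChar, (Finset.mem_filter.mp hu).2, mul_assoc]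

lemma dotProduct_rhoX_mulVec (x : Fin n → ZMod 2) (y : (Fin (m + 1) → Fin n → ZMod 2) → ℝ) :
    y ⬝ᵥ (rhoX n m x *ᵥ y) = (((2 ^ n + m).choose (m + 1) : ℝ))⁻¹ *
      ∑ M, (∑ j, walshChar j x * firstRegisterOverlap M y j) ^ 2 := by
  simp_rw [rhoX_eq_smul_sum_vecMulVec, smul_mulVec, sum_mulVec, dotProduct_smul, dotProduct_sum,
    dotProduct_vecMulVec_self_mulVec, zxTypeState_dotProduct, smul_eq_mul]

lemma dotProduct_sigmaX_mulVec (y : (Fin (m + 1) → Fin n → ZMod 2) → ℝ) :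
    y ⬝ᵥ (sigmaX n m *ᵥ y) = ∑ x, y ⬝ᵥ (rhoX n m x *ᵥ y) := by
  rw [sigmaX, sum_mulVec, dotProduct_sum]

lemma two_pow_mul_dotProduct_rhoX_mulVec_le (x : Fin n → ZMod 2)
    (y : (Fin (m + 1) → Fin n → ZMod 2) → ℝ) :
    2 ^ n * (y ⬝ᵥ (rhoX n m x *ᵥ y)) ≤ ((m : ℝ) + 1) * (y ⬝ᵥ (sigmaX n m *ᵥ y)) := by
  simp_rw [dotProduct_sigmaX_mulVec, dotProduct_rhoX_mulVec]
  rw [← Finset.mul_sum, Finset.sum_comm, mul_left_comm, mul_left_comm ((m : ℝ) + 1)]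
  refine mul_le_mul_of_nonneg_left ?_ (by positivity)
  rw [Finset.mul_sum, Finset.mul_sum]
  refine Finset.sum_le_sum fun M _ => ?_
  have hcard : ((M : Multiset (Fin n → ZMod 2)).toFinset.card : ℝ) ≤ m + 1 := by
    exact_mod_cast (Multiset.toFinset_card_le _).trans M.prop.le
  calc 2 ^ n * (∑ j, walshChar j x * firstRegisterOverlap M y j) ^ 2
      ≤ (M : Multiset (Fin n → ZMod 2)).toFinset.card *
          ∑ x', (∑ j, walshChar j x' * firstRegisterOverlap M y j) ^ 2 := by
        simpa using
          two_pow_mul_sq_sum_walshChar_mul_le (fun _ => firstRegisterOverlap_eq_zero y) x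
    _ ≤ (m + 1) * ∑ x', (∑ j, walshChar j x' * firstRegisterOverlap M y j) ^ 2 := by
        gcongr

lemma trace_rhoX_mul_le {H : Matrix (Fin (m + 1) → Fin n → ZMod 2)
      (Fin (m + 1) → Fin n → ZMod 2) ℝ} {t : ℝ} (ht : 0 ≤ t)
    (hH : ∀ y, y ⬝ᵥ (H *ᵥ y) ≤ t * (y ⬝ᵥ y)) (x : Fin n → ZMod 2) :
    (rhoX n m x * H).trace ≤ t := by
  have hchoose : (0 : ℝ) < (2 ^ n + m).choose (m + 1) := by
    exact_mod_cast Nat.choose_pos (by have := Nat.one_le_two_pow (n := n); omega)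
  rw [rhoX_eq_smul_sum_vecMulVec, smul_mul, trace_smul, Finset.sum_mul, trace_sum, smul_eq_mul,
    inv_mul_le_iff₀ hchoose]
  calc ∑ M, (vecMulVec (zxTypeState x M) (zxTypeState x M) * H).trace
      ≤ ∑ _M : Sym (Fin n → ZMod 2) (m + 1), t := by
        refine Finset.sum_le_sum fun M _ => ?_
        rw [trace_vecMulVec_self_mul]
        exact (hH _).trans (mul_le_of_le_one_right ht (zxTypeState_dotProduct_self_le_one x M))
    _ = (2 ^ n + m).choose (m + 1) * t := by
        rw [Finset.sum_const, Finset.card_univ, card_sym_eq_choose, nsmul_eq_mul]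

end TypeStates

/-- `S` plays the role of `σ^{-1/2}` and `P` that of the projection onto the support of `σ`. -/
theorem stmt19_general (n m : ℕ)
    (P S : Matrix (Fin (m + 1) → Fin n → ZMod 2) (Fin (m + 1) → Fin n → ZMod 2) ℝ)
    (hPproj : P * P = P) (hPherm : P.IsHermitian)
    (hSpsd : S.PosSemidef) (hSinv : S * sigmaX n m * S = P) :
    ∀ x : Fin n → ZMod 2,
      (∀ hM : (S * rhoX n m x * S).IsHermitian,
        ∀ i, hM.eigenvalues i ≤ ((m : ℝ) + 1) / 2 ^ n) ∧
      (rhoX n m x * S * rhoX n m x * S).trace ≤ ((m : ℝ) + 1) / 2 ^ n := by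
  intro x
  have hbound (y : (Fin (m + 1) → Fin n → ZMod 2) → ℝ) :
      y ⬝ᵥ ((S * rhoX n m x * S) *ᵥ y) ≤ ((m : ℝ) + 1) / 2 ^ n * (y ⬝ᵥ y) := by
    refine dotProduct_mul_mul_mulVec_le (by positivity) hSpsd.isHermitian (fun z => ?_) hSinv
      hPherm hPproj y
    rw [div_mul_eq_mul_div, le_div_iff₀ (by positivity), mul_comm]
    exact two_pow_mul_dotProduct_rhoX_mulVec_le x z
  refine ⟨fun hM => hM.eigenvalues_le hbound, ?_⟩
  rw [Matrix.mul_assoc, Matrix.mul_assoc, ← Matrix.mul_assoc S]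
  exact trace_rhoX_mul_le (by positivity) hbound x

/-- with `P` the orthogonal projection onto the support of `σ` and
`S = σ^{-1/2}` (the positive square root of the pseudo-inverse of `σ`,
characterized by `S ⪰ 0`, `SσS = P`, `SP = S`), every eigenvalue of the positive
semidefinite matrix `σ^{-1/2} ρ_x σ^{-1/2}` is at most `(m+1)/2^n`; consequently
`Tr(ρ_x σ^{-1/2} ρ_x σ^{-1/2}) ≤ (m+1)/2^n` for every `x`. -/
theorem stmt19 (n m : ℕ)
    (P S : Matrix (Fin (m + 1) → Fin n → ZMod 2) (Fin (m + 1) → Fin n → ZMod 2) ℝ)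
    (hPproj : P * P = P) (hPherm : P.IsHermitian)
    (hPsupp : P * sigmaX n m = sigmaX n m) (hPrank : P.rank = (sigmaX n m).rank)
    (hSpsd : S.PosSemidef) (hSinv : S * sigmaX n m * S = P) (hSP : S * P = S) :
    ∀ x : Fin n → ZMod 2,
      (∀ hM : (S * rhoX n m x * S).IsHermitian,
        ∀ i, hM.eigenvalues i ≤ ((m : ℝ) + 1) / 2 ^ n) ∧
      (rhoX n m x * S * rhoX n m x * S).trace ≤ ((m : ℝ) + 1) / 2 ^ n :=
  stmt19_general n m P S hPproj hPherm hSpsd hSinv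

end
end
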